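/- Let $N\geq 3$, $0<\mu<N$, $\delta>0$, and let $U_\varepsilon$ be as above. Then there is a constant $C>0$ such that for all small $\varepsilon>0$, $\int_{\mathbb{R}^N\setminus B_\delta}\int_{B_\delta}\frac{U_\varepsilon(x)^{2_\mu^*}U_\varepsilon(y)^{2_\mu^*}}{|x-y|^\mu}dx\,dy \leq C\,\varepsilon^{(2N-\mu)/2}$. -/

import Mathlib

/-! With `p = 2_μ^*` and `q = (2N - μ) / 2 = (N - 2) p / 2` the bubble satisfies
`U_ε(x)^p = c^p (ε / (ε² + |x|²))^q`. For `|x| ≥ δ` this is at most `c^p ε^q |x|^{-2q}`, and,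
since `ε² + |y|² ≥ 2ε|y|`, it is at most `c^p (2|y|)^{-q}` uniformly in `ε`. So the factor `ε^q`
comes out and the `ε`-free integral of `|x|^{-2q} |y|^{-q} |x - y|^{-μ}` over `B_δᶜ × B_δ` remains.
It is finite: `2q > N` makes `|x|^{-2q}` integrable outside `B_δ`, and for `|x| ≥ δ` the inner
integral is bounded independently of `x`, because `|x - y| ≥ δ/2` or `|y| ≥ δ/2`, while `q, μ < N`
make the remaining singularity locally integrable. -/

open MeasureTheory
open scoped ENNReal

/-- The Aubin-Talenti bubble `U_ε(x) = ε^{(2-N)/2}[N(N-2)]^{(N-2)/4}(1+|x/ε|²)^{-(N-2)/2}`. -/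
noncomputable def bubble (N : ℕ) (ε : ℝ) (x : EuclideanSpace ℝ (Fin N)) : ℝ :=
  ε ^ (((2 : ℝ) - N) / 2) * ((N : ℝ) * ((N : ℝ) - 2)) ^ (((N : ℝ) - 2) / 4) *
    (1 + ‖x‖ ^ 2 / ε ^ 2) ^ (-(((N : ℝ) - 2) / 2))

open Metric

section NormRpow

variable {E : Type*} [NormedAddCommGroup E] [NormedSpace ℝ E] [FiniteDimensional ℝ E]
  [MeasurableSpace E] [BorelSpace E] {μ : Measure E} [μ.IsAddHaarMeasure]

theorem lintegral_ball_norm_rpow_neg_lt_top [Nontrivial E] {b : ℝ}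
    (hb : b < Module.finrank ℝ E) (r : ℝ) :
    ∫⁻ y in ball (0 : E) r, ENNReal.ofReal (‖y‖ ^ (-b)) ∂μ < ∞ := by
  refine Integrable.lintegral_lt_top
    (integrableOn_ball_of_norm_le_rpow (C := 1) Module.finrank_pos hb ?_ ?_)
  · exact Filter.Eventually.of_forall fun y => by
      rw [one_mul, Real.norm_of_nonneg (by positivity)]
  · exact (continuous_norm.measurable.pow_const _).aestronglyMeasurable

theorem lintegral_compl_ball_norm_rpow_neg_lt_top {a δ : ℝ}
    (ha : Module.finrank ℝ E < a) (hδ : 0 < δ) :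
    ∫⁻ x in (ball (0 : E) δ)ᶜ, ENNReal.ofReal (‖x‖ ^ (-a)) ∂μ < ∞ := by
  have ha0 : 0 < a := lt_of_le_of_lt (Nat.cast_nonneg _) ha
  set k : ℝ := ((1 + δ) / δ) ^ a
  have hbound : ∀ x ∈ (ball (0 : E) δ)ᶜ,
      ENNReal.ofReal (‖x‖ ^ (-a)) ≤ ENNReal.ofReal k * ENNReal.ofReal ((1 + ‖x‖) ^ (-a)) := by
    intro x hx
    have hxδ : δ ≤ ‖x‖ := by simpa using hx
    have hle : 1 + ‖x‖ ≤ (1 + δ) / δ * ‖x‖ := by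
      rw [div_mul_eq_mul_div, le_div_iff₀ hδ]; nlinarith
    rw [← ENNReal.ofReal_mul (by positivity)]
    refine ENNReal.ofReal_le_ofReal ?_
    calc ‖x‖ ^ (-a) = k * ((1 + δ) / δ * ‖x‖) ^ (-a) := by
          rw [Real.mul_rpow (by positivity) (by positivity), ← mul_assoc,
            ← Real.rpow_add (by positivity), add_neg_cancel, Real.rpow_zero, one_mul]
      _ ≤ k * (1 + ‖x‖) ^ (-a) :=
          mul_le_mul_of_nonneg_left
            (Real.rpow_le_rpow_of_nonpos (by positivity) hle (by linarith)) (by positivity)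
  calc ∫⁻ x in (ball (0 : E) δ)ᶜ, ENNReal.ofReal (‖x‖ ^ (-a)) ∂μ
      ≤ ∫⁻ x in (ball (0 : E) δ)ᶜ, ENNReal.ofReal k * ENNReal.ofReal ((1 + ‖x‖) ^ (-a)) ∂μ :=
        setLIntegral_mono' measurableSet_ball.compl hbound
    _ ≤ ∫⁻ x, ENNReal.ofReal k * ENNReal.ofReal ((1 + ‖x‖) ^ (-a)) ∂μ :=
        setLIntegral_le_lintegral _ _
    _ < ∞ := by
        rw [lintegral_const_mul' _ _ ENNReal.ofReal_ne_top]
        exact ENNReal.mul_lt_top ENNReal.ofReal_lt_top (finite_integral_one_add_norm ha)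

theorem setLIntegral_ball_comp_sub_left (f : E → ℝ≥0∞) (x : E) (r : ℝ) :
    ∫⁻ y in ball x r, f (x - y) ∂μ = ∫⁻ z in ball 0 r, f z ∂μ := by
  rw [← lintegral_indicator measurableSet_ball, ← lintegral_indicator measurableSet_ball,
    ← lintegral_sub_left_eq_self _ x]
  congr 1 with y
  simp only [Set.indicator, mem_ball, dist_eq_norm, sub_zero, norm_sub_rev, sub_sub_cancel]

theorem lintegral_ball_norm_rpow_mul_norm_sub_rpow_le {b c δ : ℝ} (hb : 0 ≤ b) (hc : 0 ≤ c)
    (hδ : 0 < δ) {x : E} (hx : δ ≤ ‖x‖) :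
    ∫⁻ y in ball 0 δ, ENNReal.ofReal (‖y‖ ^ (-b) * ‖x - y‖ ^ (-c)) ∂μ ≤
      ENNReal.ofReal ((δ / 2) ^ (-c)) * ∫⁻ y in ball 0 δ, ENNReal.ofReal (‖y‖ ^ (-b)) ∂μ +
        ENNReal.ofReal ((δ / 2) ^ (-b)) *
          ∫⁻ z in ball 0 (δ / 2), ENNReal.ofReal (‖z‖ ^ (-c)) ∂μ := by
  set f : E → ℝ≥0∞ := fun y => ENNReal.ofReal (‖y‖ ^ (-b) * ‖x - y‖ ^ (-c))
  -- away from `x` the factor `‖x - y‖ ^ (-c)` is bounded; near `x` the factor `‖y‖ ^ (-b)` is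
  have hfar : ∀ y ∈ ball (0 : E) δ \ ball x (δ / 2),
      f y ≤ ENNReal.ofReal ((δ / 2) ^ (-c)) * ENNReal.ofReal (‖y‖ ^ (-b)) := by
    rintro y ⟨-, hy⟩
    rw [mem_ball, dist_eq_norm, norm_sub_rev, not_lt] at hy
    rw [← ENNReal.ofReal_mul (by positivity), mul_comm ((δ / 2) ^ (-c))]
    exact ENNReal.ofReal_le_ofReal (mul_le_mul_of_nonneg_left
      (Real.rpow_le_rpow_of_nonpos (by positivity) hy (by linarith)) (by positivity))
  have hnear : ∀ y ∈ ball x (δ / 2),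
      f y ≤ ENNReal.ofReal ((δ / 2) ^ (-b)) * ENNReal.ofReal (‖x - y‖ ^ (-c)) := by
    intro y hy
    rw [mem_ball, dist_eq_norm, norm_sub_rev] at hy
    have hy' : δ / 2 ≤ ‖y‖ := by linarith [norm_sub_norm_le x y]
    rw [← ENNReal.ofReal_mul (by positivity)]
    exact ENNReal.ofReal_le_ofReal (mul_le_mul_of_nonneg_right
      (Real.rpow_le_rpow_of_nonpos (by positivity) hy' (by linarith)) (by positivity))
  calc ∫⁻ y in ball 0 δ, f y ∂μ
      ≤ ∫⁻ y in (ball 0 δ \ ball x (δ / 2)) ∪ ball x (δ / 2), f y ∂μ :=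
        lintegral_mono_set fun y hy => by by_cases h : y ∈ ball x (δ / 2) <;> simp [hy, h]
    _ ≤ ∫⁻ y in ball 0 δ \ ball x (δ / 2), f y ∂μ + ∫⁻ y in ball x (δ / 2), f y ∂μ :=
        lintegral_union_le _ _ _
    _ ≤ ∫⁻ y in ball 0 δ, ENNReal.ofReal ((δ / 2) ^ (-c)) * ENNReal.ofReal (‖y‖ ^ (-b)) ∂μ +
          ∫⁻ y in ball x (δ / 2),
            ENNReal.ofReal ((δ / 2) ^ (-b)) * ENNReal.ofReal (‖x - y‖ ^ (-c)) ∂μ := by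
        gcongr ?_ + ?_
        · exact (setLIntegral_mono' (measurableSet_ball.diff measurableSet_ball) hfar).trans
            (lintegral_mono_set Set.sdiff_subset)
        · exact setLIntegral_mono' measurableSet_ball hnear
    _ = _ := by
        rw [lintegral_const_mul' _ _ ENNReal.ofReal_ne_top,
          lintegral_const_mul' _ _ ENNReal.ofReal_ne_top,
          setLIntegral_ball_comp_sub_left (fun z => ENNReal.ofReal (‖z‖ ^ (-c)))]

theorem lintegral_compl_ball_lintegral_ball_norm_rpow_lt_top [Nontrivial E] {a b c δ : ℝ}
    (ha : Module.finrank ℝ E < a) (hb0 : 0 ≤ b) (hb : b < Module.finrank ℝ E)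
    (hc0 : 0 ≤ c) (hc : c < Module.finrank ℝ E) (hδ : 0 < δ) :
    ∫⁻ x in (ball (0 : E) δ)ᶜ, ∫⁻ y in ball 0 δ,
      ENNReal.ofReal (‖x‖ ^ (-a) * (‖y‖ ^ (-b) * ‖x - y‖ ^ (-c))) ∂μ ∂μ < ∞ := by
  set S := ENNReal.ofReal ((δ / 2) ^ (-c)) * ∫⁻ y in ball 0 δ, ENNReal.ofReal (‖y‖ ^ (-b)) ∂μ +
    ENNReal.ofReal ((δ / 2) ^ (-b)) * ∫⁻ z in ball 0 (δ / 2), ENNReal.ofReal (‖z‖ ^ (-c)) ∂μ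
  have hS : S < ∞ := ENNReal.add_lt_top.2
    ⟨ENNReal.mul_lt_top ENNReal.ofReal_lt_top (lintegral_ball_norm_rpow_neg_lt_top hb δ),
      ENNReal.mul_lt_top ENNReal.ofReal_lt_top (lintegral_ball_norm_rpow_neg_lt_top hc _)⟩
  have hinner : ∀ x ∈ (ball (0 : E) δ)ᶜ, ∫⁻ y in ball 0 δ,
      ENNReal.ofReal (‖x‖ ^ (-a) * (‖y‖ ^ (-b) * ‖x - y‖ ^ (-c))) ∂μ ≤
        S * ENNReal.ofReal (‖x‖ ^ (-a)) := by
    intro x hx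
    simp_rw [ENNReal.ofReal_mul (Real.rpow_nonneg (norm_nonneg x) _)]
    rw [lintegral_const_mul' _ _ ENNReal.ofReal_ne_top, mul_comm]
    gcongr
    exact lintegral_ball_norm_rpow_mul_norm_sub_rpow_le hb0 hc0 hδ (by simpa using hx)
  calc _ ≤ ∫⁻ x in (ball (0 : E) δ)ᶜ, S * ENNReal.ofReal (‖x‖ ^ (-a)) ∂μ :=
        setLIntegral_mono' measurableSet_ball.compl hinner
    _ < ∞ := by
        rw [lintegral_const_mul' _ _ hS.ne]
        exact ENNReal.mul_lt_top hS (lintegral_compl_ball_norm_rpow_neg_lt_top ha hδ)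

end NormRpow

noncomputable def bubbleConst (N : ℕ) : ℝ := ((N : ℝ) * ((N : ℝ) - 2)) ^ (((N : ℝ) - 2) / 4)

section Bubble

variable {N : ℕ} {ε p q : ℝ}

theorem bubbleConst_nonneg (hN : 2 ≤ N) : 0 ≤ bubbleConst N := by
  have hN' : (2 : ℝ) ≤ N := by exact_mod_cast hN
  exact Real.rpow_nonneg (by nlinarith) _

theorem bubble_eq (hε : 0 < ε) (x : EuclideanSpace ℝ (Fin N)) :
    bubble N ε x = bubbleConst N * (ε / (ε ^ 2 + ‖x‖ ^ 2)) ^ (((N : ℝ) - 2) / 2) := by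
  have hε' : ε / (ε ^ 2 + ‖x‖ ^ 2) = (ε * (1 + ‖x‖ ^ 2 / ε ^ 2))⁻¹ := by
    field_simp
  rw [bubble, bubbleConst, hε', Real.inv_rpow (by positivity), ← Real.rpow_neg (by positivity),
    Real.mul_rpow hε.le (by positivity), show ((2 : ℝ) - N) / 2 = -(((N : ℝ) - 2) / 2) by ring]
  ring

theorem bubble_rpow_eq (hN : 2 ≤ N) (hε : 0 < ε) (hpq : ((N : ℝ) - 2) / 2 * p = q)
    (x : EuclideanSpace ℝ (Fin N)) :
    bubble N ε x ^ p = bubbleConst N ^ p * (ε / (ε ^ 2 + ‖x‖ ^ 2)) ^ q := by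
  rw [bubble_eq hε, Real.mul_rpow (bubbleConst_nonneg hN) (by positivity),
    ← Real.rpow_mul (by positivity : 0 ≤ ε / (ε ^ 2 + ‖x‖ ^ 2)), hpq]

theorem bubble_rpow_le_rpow_mul_norm_rpow_neg (hN : 2 ≤ N) (hε : 0 < ε)
    (hpq : ((N : ℝ) - 2) / 2 * p = q) (hq : 0 ≤ q) {x : EuclideanSpace ℝ (Fin N)} (hx : x ≠ 0) :
    bubble N ε x ^ p ≤ bubbleConst N ^ p * (ε ^ q * ‖x‖ ^ (-(2 * q))) := by
  have hx' : 0 < ‖x‖ := norm_pos_iff.2 hx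
  rw [bubble_rpow_eq hN hε hpq]
  refine mul_le_mul_of_nonneg_left ?_ (Real.rpow_nonneg (bubbleConst_nonneg hN) _)
  calc (ε / (ε ^ 2 + ‖x‖ ^ 2)) ^ q ≤ (ε / ‖x‖ ^ 2) ^ q := by
        gcongr
        linarith [sq_nonneg ε]
    _ = ε ^ q * ‖x‖ ^ (-(2 * q)) := by
        rw [Real.div_rpow hε.le (by positivity), ← Real.rpow_natCast_mul hx'.le,
          Real.rpow_neg hx'.le, div_eq_mul_inv]
        norm_num

theorem bubble_rpow_le_norm_rpow_neg (hN : 2 ≤ N) (hε : 0 < ε)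
    (hpq : ((N : ℝ) - 2) / 2 * p = q) (hq : 0 ≤ q) {y : EuclideanSpace ℝ (Fin N)} (hy : y ≠ 0) :
    bubble N ε y ^ p ≤ bubbleConst N ^ p * (2 ^ (-q) * ‖y‖ ^ (-q)) := by
  have hy' : 0 < ‖y‖ := norm_pos_iff.2 hy
  rw [bubble_rpow_eq hN hε hpq]
  refine mul_le_mul_of_nonneg_left ?_ (Real.rpow_nonneg (bubbleConst_nonneg hN) _)
  calc (ε / (ε ^ 2 + ‖y‖ ^ 2)) ^ q ≤ (2 * ‖y‖)⁻¹ ^ q := by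
        gcongr
        rw [div_le_iff₀ (by positivity)]
        field_simp
        nlinarith [sq_nonneg (ε - ‖y‖)]
    _ = 2 ^ (-q) * ‖y‖ ^ (-q) := by
        rw [Real.inv_rpow (by positivity), ← Real.rpow_neg (by positivity),
          Real.mul_rpow zero_le_two hy'.le]

theorem bubble_rpow_mul_bubble_rpow_div_le (hN : 2 ≤ N) (hε : 0 < ε)
    (hpq : ((N : ℝ) - 2) / 2 * p = q) (hq : 0 ≤ q) {x y : EuclideanSpace ℝ (Fin N)}
    (hx : x ≠ 0) (hy : y ≠ 0) (c : ℝ) :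
    bubble N ε x ^ p * bubble N ε y ^ p / ‖x - y‖ ^ c ≤
      bubbleConst N ^ p * bubbleConst N ^ p * 2 ^ (-q) * ε ^ q *
        (‖x‖ ^ (-(2 * q)) * (‖y‖ ^ (-q) * ‖x - y‖ ^ (-c))) := by
  have hy0 : 0 ≤ bubble N ε y ^ p := Real.rpow_nonneg
    ((bubble_eq hε y).symm ▸ mul_nonneg (bubbleConst_nonneg hN) (by positivity)) _
  rw [div_eq_mul_inv, ← Real.rpow_neg (norm_nonneg _)]
  calc bubble N ε x ^ p * bubble N ε y ^ p * ‖x - y‖ ^ (-c)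
      ≤ bubbleConst N ^ p * (ε ^ q * ‖x‖ ^ (-(2 * q))) *
          (bubbleConst N ^ p * (2 ^ (-q) * ‖y‖ ^ (-q))) * ‖x - y‖ ^ (-c) := by
        refine mul_le_mul_of_nonneg_right (mul_le_mul
          (bubble_rpow_le_rpow_mul_norm_rpow_neg hN hε hpq hq hx)
          (bubble_rpow_le_norm_rpow_neg hN hε hpq hq hy) hy0 ?_) (by positivity)
        exact mul_nonneg (Real.rpow_nonneg (bubbleConst_nonneg hN) _) (by positivity)
    _ = _ := by ring

end Bubble

/-- Exterior-interior estimate: `∬_{B_δᶜ × B_δ} U_ε^{2μ*} U_ε^{2μ*} / |x-y|^μ = O(ε^{(2N-μ)/2})`. -/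
theorem bubble_exterior_interior_estimate (N : ℕ) (hN : 3 ≤ N) (δ : ℝ) (hδ : 0 < δ)
    (μ : ℝ) (hμ0 : 0 < μ) (hμN : μ < N) :
    ∃ C > (0 : ℝ), ∃ ε₀ > (0 : ℝ), ∀ ε : ℝ, 0 < ε → ε < ε₀ →
      (∫⁻ x in (Metric.ball (0 : EuclideanSpace ℝ (Fin N)) δ)ᶜ,
        ∫⁻ y in Metric.ball (0 : EuclideanSpace ℝ (Fin N)) δ,
          ENNReal.ofReal (bubble N ε x ^ ((2 * (N : ℝ) - μ) / ((N : ℝ) - 2)) *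
            bubble N ε y ^ ((2 * (N : ℝ) - μ) / ((N : ℝ) - 2)) / ‖x - y‖ ^ μ)) ≤
        ENNReal.ofReal (C * ε ^ ((2 * (N : ℝ) - μ) / 2)) := by
  have hN' : (3 : ℝ) ≤ N := by exact_mod_cast hN
  have : NeZero N := ⟨by omega⟩
  set p := (2 * (N : ℝ) - μ) / ((N : ℝ) - 2)
  set q := (2 * (N : ℝ) - μ) / 2
  have hpq : ((N : ℝ) - 2) / 2 * p = q := by
    simp only [p, q]
    field_simp [show (N : ℝ) - 2 ≠ 0 by linarith]
  obtain ⟨hq0, hqN, hNq⟩ : 0 ≤ q ∧ q < N ∧ N < 2 * q := by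
    simp only [q]; refine ⟨?_, ?_, ?_⟩ <;> linarith
  have hdim : (Module.finrank ℝ (EuclideanSpace ℝ (Fin N)) : ℝ) = N := by simp
  set M := ∫⁻ x in (ball (0 : EuclideanSpace ℝ (Fin N)) δ)ᶜ, ∫⁻ y in ball 0 δ,
      ENNReal.ofReal (‖x‖ ^ (-(2 * q)) * (‖y‖ ^ (-q) * ‖x - y‖ ^ (-μ)))
  have hM : M < ∞ := lintegral_compl_ball_lintegral_ball_norm_rpow_lt_top
    (by rwa [hdim]) hq0 (by rwa [hdim]) hμ0.le (by rwa [hdim]) hδ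
  set K := bubbleConst N ^ p * bubbleConst N ^ p * 2 ^ (-q)
  have hK : 0 ≤ K := by have := bubbleConst_nonneg (N := N) (by omega); positivity
  refine ⟨K * M.toReal + 1, by positivity, 1, one_pos, fun ε hε _ => ?_⟩
  calc _ ≤ ∫⁻ x in (ball (0 : EuclideanSpace ℝ (Fin N)) δ)ᶜ, ∫⁻ y in ball 0 δ,
        ENNReal.ofReal (K * ε ^ q) *
          ENNReal.ofReal (‖x‖ ^ (-(2 * q)) * (‖y‖ ^ (-q) * ‖x - y‖ ^ (-μ))) := by
        refine setLIntegral_mono' measurableSet_ball.compl fun x hx => lintegral_mono_ae ?_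
        filter_upwards [ae_restrict_of_ae (volume.ae_ne 0)] with y hy
        rw [← ENNReal.ofReal_mul (mul_nonneg hK (by positivity))]
        exact ENNReal.ofReal_le_ofReal (bubble_rpow_mul_bubble_rpow_div_le (by omega) hε hpq
          hq0 (by rintro rfl; simp [hδ] at hx) hy μ)
    _ = ENNReal.ofReal (K * ε ^ q) * M := by
        simp_rw [lintegral_const_mul' _ _ ENNReal.ofReal_ne_top]
        rfl
    _ = ENNReal.ofReal (K * M.toReal * ε ^ q) := by
        rw [← ENNReal.ofReal_toReal hM.ne, ← ENNReal.ofReal_mul (mul_nonneg hK (by positivity)),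
          ENNReal.toReal_ofReal ENNReal.toReal_nonneg, mul_right_comm]
    _ ≤ ENNReal.ofReal ((K * M.toReal + 1) * ε ^ q) := by
        gcongr
        linarith
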